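/- Let n ≥ 2 and N be integers with n+1 ≤ N ≤ 2n, and let z_1, …, z_N be points on the unit sphere S^{n-1} ⊂ ℝ^n. Then Σ_{i=1}^N Σ_{j=1}^N ‖z_i − z_j‖ ≤ N·(2N(N−n−1) + (N−2)·√(2nN(n−1)(N−2))) / (Nn + N − 4n). -/

import Mathlib

/-!
Degree-2 linear programming bound. For unit vectors with `t = ⟪x, y⟫` one has
`‖x - y‖ = √(2 - 2t)`, and for every `u ≥ 0` a quadratic polynomial in `t` majorizes
`u (u + 2)² ‖x - y‖` on the sphere. Summing over all pairs, the sum of the majorant is controlled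
by the first two moments of the Gram matrix: `∑ tᵢⱼ = ‖∑ zᵢ‖² ≥ 0`, and `∑ tᵢⱼ² ≥ N² / n`
because `∑ tᵢⱼ²` is the squared Frobenius norm of the frame operator `∑ zᵢ zᵢᵀ`, whose trace
is `N`. Choosing the contact distance `u` optimally gives the bound.
-/

open Finset Module RealInnerProductSpace

/-- With `d = ‖x - y‖`, this majorant minus `u (u + 2)² d` is `(d - u)² (2 - d) (d + 2 + 2u) / 2`:
it touches the distance doubly at `d = u` and again at antipodal points. -/
def sphereDistMajorant (u t : ℝ) : ℝ :=
  2 * u ^ 3 + 5 * u ^ 2 + 4 * u + 2 - u * (4 + 3 * u) * t - 2 * t ^ 2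

lemma sphereDistMajorant_one (u : ℝ) : sphereDistMajorant u 1 = 2 * u ^ 2 * (1 + u) := by
  unfold sphereDistMajorant; ring

lemma mul_le_sphereDistMajorant {u d : ℝ} (hu : 0 ≤ u) (hd₀ : 0 ≤ d) (hd₂ : d ≤ 2) :
    u * (u + 2) ^ 2 * d ≤ sphereDistMajorant u (1 - d ^ 2 / 2) := by
  have hfactor : sphereDistMajorant u (1 - d ^ 2 / 2) - u * (u + 2) ^ 2 * d
      = (d - u) ^ 2 * (2 - d) * (d + 2 + 2 * u) / 2 := by
    unfold sphereDistMajorant; ring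
  have hnonneg : 0 ≤ (d - u) ^ 2 * (2 - d) * (d + 2 + 2 * u) / 2 := by
    have : 0 ≤ 2 - d := by linarith
    positivity
  linarith

theorem sum_sum_sq_sum_mul_comm {ι κ R : Type*} [Fintype ι] [Fintype κ] [CommSemiring R]
    (x : ι → κ → R) :
    ∑ i, ∑ j, (∑ k, x i k * x j k) ^ 2 = ∑ k, ∑ l, (∑ i, x i k * x i l) ^ 2 := by
  simp only [sq, sum_mul_sum, mul_mul_mul_comm (x _ _) (x _ _) (x _ _)]
  simp_rw [sum_comm (s := (univ : Finset ι)) (t := (univ : Finset κ))]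

theorem sq_sum_diag_le_card_mul_sum_sum_sq {κ : Type*} [Fintype κ] (M : κ → κ → ℝ) :
    (∑ k, M k k) ^ 2 ≤ Fintype.card κ * ∑ k, ∑ l, M k l ^ 2 :=
  calc (∑ k, M k k) ^ 2 ≤ Fintype.card κ * ∑ k, M k k ^ 2 := by
        simpa using sq_sum_le_card_mul_sum_sq (s := univ) (f := fun k => M k k)
    _ ≤ Fintype.card κ * ∑ k, ∑ l, M k l ^ 2 := by
        gcongr with k
        exact single_le_sum (f := fun l => M k l ^ 2) (fun _ _ => sq_nonneg _) (mem_univ k)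

section InnerProductSpace

variable {ι E : Type*} [Fintype ι] [NormedAddCommGroup E] [InnerProductSpace ℝ E]

lemma mul_norm_sub_le_sphereDistMajorant {u : ℝ} (hu : 0 ≤ u) {x y : E} (hx : ‖x‖ = 1)
    (hy : ‖y‖ = 1) : u * (u + 2) ^ 2 * ‖x - y‖ ≤ sphereDistMajorant u ⟪x, y⟫ := by
  have hinner : ⟪x, y⟫ = 1 - ‖x - y‖ ^ 2 / 2 := by
    rw [norm_sub_sq_real, hx, hy]; ring
  have hdist : ‖x - y‖ ≤ 2 := by
    linarith [norm_sub_le x y]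
  rw [hinner]
  exact mul_le_sphereDistMajorant hu (norm_nonneg _) hdist

theorem sum_sum_inner_nonneg (z : ι → E) : 0 ≤ ∑ i, ∑ j, ⟪z i, z j⟫ := by
  have h := real_inner_self_nonneg (x := ∑ i, z i)
  simp_rw [sum_inner, inner_sum] at h
  exact h

theorem sq_sum_norm_sq_le_finrank_mul_sum_sum_inner_sq [FiniteDimensional ℝ E] (z : ι → E) :
    (∑ i, ‖z i‖ ^ 2) ^ 2 ≤ finrank ℝ E * ∑ i, ∑ j, ⟪z i, z j⟫ ^ 2 := by
  set b := stdOrthonormalBasis ℝ E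
  set x : ι → Fin (finrank ℝ E) → ℝ := fun i k => ⟪b k, z i⟫
  have hx : ∀ i j, ⟪z i, z j⟫ = ∑ k, x i k * x j k := fun i j => by
    simp only [x, ← b.sum_inner_mul_inner (z i) (z j), real_inner_comm (z i)]
  have htrace : ∑ i, ‖z i‖ ^ 2 = ∑ k, ∑ i, x i k * x i k := by
    simp only [← real_inner_self_eq_norm_sq, hx]
    exact sum_comm
  simpa [htrace, hx, sum_sum_sq_sum_mul_comm x] using
    sq_sum_diag_le_card_mul_sum_sum_sq fun k l => ∑ i, x i k * x i l

lemma mul_sum_norm_sub_add_le_sum_sphereDistMajorant {u : ℝ} (hu : 0 ≤ u) {z : ι → E}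
    (hz : ∀ i, ‖z i‖ = 1) :
    u * (u + 2) ^ 2 * ∑ i, ∑ j, ‖z i - z j‖ + Fintype.card ι * (2 * u ^ 2 * (1 + u)) ≤
      ∑ i, ∑ j, sphereDistMajorant u ⟪z i, z j⟫ := by
  classical
  have hpoint : ∀ i j, u * (u + 2) ^ 2 * ‖z i - z j‖
      + (if i = j then 2 * u ^ 2 * (1 + u) else 0) ≤ sphereDistMajorant u ⟪z i, z j⟫ := by
    intro i j
    rcases eq_or_ne i j with rfl | hij
    · simp [hz, sphereDistMajorant_one]
    · simpa [hij] using mul_norm_sub_le_sphereDistMajorant hu (hz i) (hz j)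
  calc _ = ∑ i, ∑ j, (u * (u + 2) ^ 2 * ‖z i - z j‖
          + (if i = j then 2 * u ^ 2 * (1 + u) else 0)) := by
        simp [sum_add_distrib, mul_sum]
    _ ≤ _ := sum_le_sum fun i _ => sum_le_sum fun j _ => hpoint i j

theorem finrank_mul_sum_norm_sub_le [FiniteDimensional ℝ E] {u : ℝ} (hu : 0 ≤ u) {z : ι → E}
    (hz : ∀ i, ‖z i‖ = 1) :
    finrank ℝ E * (u * (u + 2) ^ 2 * ∑ i, ∑ j, ‖z i - z j‖
        + Fintype.card ι * (2 * u ^ 2 * (1 + u))) ≤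
      (finrank ℝ E * (2 * u ^ 3 + 5 * u ^ 2 + 4 * u + 2) - 2) * Fintype.card ι ^ 2 := by
  have hexpand : ∑ i, ∑ j, sphereDistMajorant u ⟪z i, z j⟫ =
      (2 * u ^ 3 + 5 * u ^ 2 + 4 * u + 2) * Fintype.card ι ^ 2
        - u * (4 + 3 * u) * ∑ i, ∑ j, ⟪z i, z j⟫ - 2 * ∑ i, ∑ j, ⟪z i, z j⟫ ^ 2 := by
    simp only [sphereDistMajorant, sum_sub_distrib, sum_const, card_univ, nsmul_eq_mul, mul_sum]
    ring
  have hfirst : 0 ≤ finrank ℝ E * (u * (4 + 3 * u)) * ∑ i, ∑ j, ⟪z i, z j⟫ :=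
    mul_nonneg (by positivity) (sum_sum_inner_nonneg z)
  have hsecond := sq_sum_norm_sq_le_finrank_mul_sum_sum_inner_sq z
  simp only [hz, one_pow, sum_const, card_univ, nsmul_eq_mul, mul_one] at hsecond
  have hmajorant := mul_le_mul_of_nonneg_left
    (mul_sum_norm_sub_add_le_sum_sphereDistMajorant hu hz) (Nat.cast_nonneg (finrank ℝ E))
  rw [hexpand] at hmajorant
  linarith

end InnerProductSpace

lemma le_div_of_majorant_bound_of_optimal_contact {n N u S : ℝ} (hn : 0 < n) (hu : 0 < u)
    (hden : 0 < N * n + N - 4 * n) (hu2 : n * (N - 2) * u ^ 2 = 2 * N * (n - 1))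
    (hbound : n * (u * (u + 2) ^ 2 * S + N * (2 * u ^ 2 * (1 + u))) ≤
      (n * (2 * u ^ 3 + 5 * u ^ 2 + 4 * u + 2) - 2) * N ^ 2) :
    S ≤ N * (2 * N * (N - n - 1) + (N - 2) * (n * (N - 2) * u)) / (N * n + N - 4 * n) := by
  rw [le_div_iff₀ hden]
  refine le_of_mul_le_mul_left ?_ (by positivity : 0 < n * (u * (u + 2) ^ 2))
  calc _ = (N * n + N - 4 * n) * (n * (u * (u + 2) ^ 2 * S + N * (2 * u ^ 2 * (1 + u))))
          - (N * n + N - 4 * n) * n * N * (2 * u ^ 2 * (1 + u)) := by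
        ring
    _ ≤ (N * n + N - 4 * n) * ((n * (2 * u ^ 3 + 5 * u ^ 2 + 4 * u + 2) - 2) * N ^ 2)
          - (N * n + N - 4 * n) * n * N * (2 * u ^ 2 * (1 + u)) := by
        gcongr
    _ = _ := by
        linear_combination (-N * (N + n * N - 4 * n + n * (N - 2) * u * (u + 2))) * hu2

theorem sum_dist_le_tau2 (n N : ℕ) (hn : 2 ≤ n) (hN1 : n + 1 ≤ N)
    (z : Fin N → EuclideanSpace ℝ (Fin n)) (hz : ∀ i, ‖z i‖ = 1) :
    ∑ i, ∑ j, ‖z i - z j‖ ≤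
      (N : ℝ) * (2 * N * ((N : ℝ) - n - 1)
          + ((N : ℝ) - 2) * Real.sqrt (2 * n * N * ((n : ℝ) - 1) * ((N : ℝ) - 2)))
        / ((N : ℝ) * n + N - 4 * n) := by
  have hn' : (2 : ℝ) ≤ n := by exact_mod_cast hn
  have hN' : (n : ℝ) + 1 ≤ N := by exact_mod_cast hN1
  have hscale : 0 < (n : ℝ) * (N - 2) := by nlinarith
  have hden : 0 < (N : ℝ) * n + N - 4 * n := by nlinarith
  have hrad : 0 < 2 * n * N * ((n : ℝ) - 1) * ((N : ℝ) - 2) :=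
    mul_pos (mul_pos (by nlinarith) (by linarith)) (by linarith)
  set R := Real.sqrt (2 * n * N * ((n : ℝ) - 1) * ((N : ℝ) - 2))
  -- the optimal contact distance: `n (N - 2) u² = 2 N (n - 1)`
  obtain ⟨u, hu, hRu⟩ : ∃ u : ℝ, 0 < u ∧ R = n * (N - 2) * u :=
    ⟨R / (n * (N - 2)), div_pos (Real.sqrt_pos.mpr hrad) hscale,
      (mul_div_cancel₀ R hscale.ne').symm⟩
  have hu2 : n * ((N : ℝ) - 2) * u ^ 2 = 2 * N * (n - 1) := by
    have hR2 : R ^ 2 = 2 * n * N * ((n : ℝ) - 1) * ((N : ℝ) - 2) := Real.sq_sqrt hrad.le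
    rw [hRu] at hR2
    exact mul_left_cancel₀ hscale.ne' (by linear_combination hR2)
  have hbound := finrank_mul_sum_norm_sub_le hu.le hz
  simp only [finrank_euclideanSpace_fin, Fintype.card_fin] at hbound
  rw [hRu]
  exact le_div_of_majorant_bound_of_optimal_contact (by linarith) hu hden hu2 hbound
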